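/- Let B_r be a finite set of finitely supported nonnegative vectors r : ι → ℝ, let m[d] = max over x ∈ B_r of x[d], and let M be a real number (MinPruneScore). Let s = s' + s'' be a finitely supported nonnegative vector split so that Σ_d m[d]·s'[d] ≤ M (the unindexed part) with s', s'' nonnegative. If r ∈ B_r, p ≥ M, and ⟨r, s⟩ > p, then there exists a dimension d with r[d] > 0 and s''[d] > 0. -/
import Mathlib


open Finset

/-- Theorem 1 of the paper. `Br` is the outer block of nonnegative vectors,
`m d = max_{x ∈ Br} x d` is modeled by `Br.sup' ⟨r, hr⟩ (fun x => x d)`,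
`M` is MinPruneScore and `p = pruneScore(r) ≥ M`. The inner vector `s = s' + s''`
is split into its unindexed part `s'` (with `Σ_d m d · s' d ≤ M`) and its
indexed part `s''`. If `⟨r, s⟩ > p`, then `r` shares a positive dimension
with the indexed part `s''`. -/
theorem knn_candidate_found {ι : Type*} [Fintype ι]
    (Br : Finset (ι →₀ ℝ)) (hBr : ∀ x ∈ Br, ∀ d, 0 ≤ x d)
    (r : ι →₀ ℝ) (hr : r ∈ Br)
    (s' s'' : ι →₀ ℝ) (hs' : ∀ d, 0 ≤ s' d) (hs'' : ∀ d, 0 ≤ s'' d)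
    (M p : ℝ)
    (hunindexed : ∑ d, (Br.sup' ⟨r, hr⟩ fun x => x d) * s' d ≤ M)
    (hMp : M ≤ p)
    (hdot : ∑ d, r d * (s' + s'') d > p) :
    ∃ d, r d > 0 ∧ s'' d > 0 := by
  by_contra h
  push_neg at h
  have hzero : ∀ d, r d * s'' d = 0 := by
    intro d
    rcases lt_or_eq_of_le (hBr r hr d) with hrd | hrd
    · have := h d hrd
      have : s'' d = 0 := le_antisymm this (hs'' d)
      simp [this]
    · simp [← hrd]
  have hsum : ∑ d, r d * (s' + s'') d = ∑ d, r d * s' d := by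
    apply Finset.sum_congr rfl
    intro d _
    simp [mul_add, hzero d]
  have hle : ∑ d, r d * s' d ≤ ∑ d, (Br.sup' ⟨r, hr⟩ fun x => x d) * s' d := by
    apply Finset.sum_le_sum
    intro d _
    exact mul_le_mul_of_nonneg_right (Finset.le_sup' (fun x => x d) hr) (hs' d)
  linarith [hsum ▸ hdot]
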